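/- arXiv:1309.2216 — 3 statements merged into one kernel-verified Lean document; each statement's English description precedes it below -/
import Mathlib

section
/- Let n be a positive integer. Every triangulation X ∈ 𝒯(n) of the punctured n-gon consists of exactly n admissible arcs, i.e., X is finite with |X| = n. (Adachi, Proposition 2.4(1).) -/
/-!
Combinatorial model of admissible arcs and triangulations of a regular
`n`-gon with one puncture (following Adachi, "The classification of
τ-tilting modules over Nakayama algebras").
-/

namespace Punctured

/-- Admissible arcs in a regular `n`-gon with one puncture:
an *inner arc* `inner i t` runs counterclockwise from vertex `i` to vertex
`i + t` (with `2 ≤ t ≤ n` required for admissibility); a *projective arc*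
`proj j` runs from the puncture to the vertex `j`. -/
inductive Arc (n : ℕ) : Type
  | inner (i : ZMod n) (t : ℕ) : Arc n
  | proj (j : ZMod n) : Arc n

namespace Arc

/-- The terminal point of an admissible arc. -/
def terminal {n : ℕ} : Arc n → ZMod n
  | .inner i t => i + (t : ZMod n)
  | .proj j => j

/-- Admissibility: inner arcs must have length `2 ≤ t ≤ n`. -/
def IsAdmissible {n : ℕ} : Arc n → Prop
  | .inner _ t => 2 ≤ t ∧ t ≤ n
  | .proj _ => True

/-- Compatibility (non-crossing) of two admissible arcs, defined via
lifts to `ℤ`. -/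
def Compatible {n : ℕ} : Arc n → Arc n → Prop
  | .inner i t, .inner k s =>
      ¬ ∃ x y : ℤ, (x : ZMod n) = i ∧ (y : ZMod n) = k ∧
        ((x < y ∧ y < x + (t : ℤ) ∧ x + (t : ℤ) < y + (s : ℤ)) ∨
         (y < x ∧ x < y + (s : ℤ) ∧ y + (s : ℤ) < x + (t : ℤ)))
  | .inner i t, .proj j =>
      ¬ ∃ x y : ℤ, (x : ZMod n) = i ∧ (y : ZMod n) = j ∧ x < y ∧ y < x + (t : ℤ)
  | .proj j, .inner i t =>
      ¬ ∃ x y : ℤ, (x : ZMod n) = i ∧ (y : ZMod n) = j ∧ x < y ∧ y < x + (t : ℤ)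
  | .proj _, .proj _ => True

end Arc

/-- A set of admissible arcs which is pairwise compatible. -/
def PairwiseCompatible (n : ℕ) (X : Set (Arc n)) : Prop :=
  (∀ a ∈ X, a.IsAdmissible) ∧ ∀ a ∈ X, ∀ b ∈ X, a.Compatible b

/-- A triangulation of the punctured `n`-gon: a pairwise compatible set of
admissible arcs, maximal under inclusion among such sets. -/
def IsTriangulation (n : ℕ) (X : Set (Arc n)) : Prop :=
  PairwiseCompatible n X ∧
    ∀ Y : Set (Arc n), PairwiseCompatible n Y → X ⊆ Y → Y = X

/-- `top(X)`: for each residue class `c`, the number of arcs of `X` with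
terminal point `c`. -/
noncomputable def topSeq (n : ℕ) (X : Set (Arc n)) : ZMod n → ℕ :=
  fun c => {arc ∈ X | Arc.terminal arc = c}.ncard

/-- The representative of `p` modulo `n` lying in `{1, …, n}`. -/
def resRep (n : ℕ) (p : ℤ) : ℕ := ((p - 1) % (n : ℤ)).toNat + 1

/-- `a'_p := Σ_{j=1}^{(p)_n} (a_j - 1)`, the `n`-periodic extension of the
partial-sum sequence of `a`. -/
def psum (n : ℕ) (a : ZMod n → ℕ) (p : ℤ) : ℤ :=
  ∑ j ∈ Finset.Icc 1 (resRep n p), ((a ((j : ℕ) : ZMod n) : ℤ) - 1)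

/-- `‖a'‖ := max {a'_1, …, a'_n}`. -/
noncomputable def pnorm (n : ℕ) (a : ZMod n → ℕ) : ℤ :=
  sSup ((fun i : ℕ => psum n a (i : ℤ)) '' Set.Icc 1 n)

/-- `δ_p = 1` if `a'_p = ‖a'‖` and `δ_p = 0` otherwise. -/
noncomputable def deltaInt (n : ℕ) (a : ZMod n → ℕ) (p : ℤ) : ℤ :=
  if psum n a p = pnorm n a then 1 else 0

/-- `k_s^j := max {k ∈ ℤ : k < j - 1 and a'_k = a'_{j-1} + s}`. -/
noncomputable def kmax (n : ℕ) (a : ZMod n → ℕ) (j s : ℤ) : ℤ :=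
  sSup {k : ℤ | k < j - 1 ∧ psum n a k = psum n a (j - 1) + s}

/-- `ℓ_j(a)`. -/
noncomputable def ellj (n : ℕ) (a : ZMod n → ℕ) (j : ℕ) : ℤ :=
  if (a ((j : ℕ) : ZMod n) : ℤ) - deltaInt n a (j : ℤ) = 0 then 0
  else (j : ℤ) - kmax n a (j : ℤ) ((a ((j : ℕ) : ZMod n) : ℤ) - deltaInt n a (j : ℤ))

/-!
Send each vertex `v` to the shortest inner arc of `X` passing over `v`, or to the projective
arc at `v` when no inner arc passes over it (that projective arc then crosses nothing, so it
lies in `X` by maximality). This is a bijection onto `X`. In a lift `[x, x + t]` of an inner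
arc, call an interior point exposed if no proper subarc from `X` passes over it; the endpoint of a
longest proper subarc shows that an exposed point exists, and maximality shows it is unique:
for two exposed points `a < b` the arc `[x, b]` crosses nothing, so it would lie in `X` and
pass over `a`. A vertex is sent to an inner arc exactly when it is exposed in a lift of it.
-/

section

open Arc

variable {n : ℕ} {X : Set (Arc n)}

lemma Arc.Compatible.symm {a b : Arc n} (h : a.Compatible b) : b.Compatible a := by
  cases a <;> cases b
  case inner.inner => exact fun ⟨x, y, hx, hy, hp⟩ => h ⟨y, x, hy, hx, hp.symm⟩
  all_goals exact h

lemma Arc.IsAdmissible.compatible_self {a : Arc n} (ha : a.IsAdmissible) : a.Compatible a := by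
  cases a with
  | inner i t =>
    obtain ⟨-, htn⟩ := ha
    rintro ⟨x, y, hx, hy, hp⟩
    have hdvd : (n : ℤ) ∣ y - x := (ZMod.intCast_eq_intCast_iff_dvd_sub x y n).1 (hx.trans hy.symm)
    have hlt : |y - x| < n := abs_lt.2 ⟨by omega, by omega⟩
    have := Int.eq_zero_of_abs_lt_dvd hdvd hlt
    omega
  | proj j => trivial

lemma intCast_add_sub_of_eq {x x' : ℤ} (h : (x' : ZMod n) = x) (y : ℤ) :
    ((y + x - x' : ℤ) : ZMod n) = y := by
  push_cast
  rw [h]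
  ring

def Covers (k : ZMod n) (s : ℕ) (v : ZMod n) : Prop :=
  ∃ x y : ℤ, (x : ZMod n) = k ∧ (y : ZMod n) = v ∧ x < y ∧ y < x + s

lemma covers_intCast_left_iff {x : ℤ} {s : ℕ} {v : ZMod n} :
    Covers (x : ZMod n) s v ↔ ∃ y : ℤ, (y : ZMod n) = v ∧ x < y ∧ y < x + s :=
  ⟨fun ⟨x', y', hx', hy', h1, h2⟩ =>
    ⟨y' + x - x', by rw [intCast_add_sub_of_eq hx', hy'], by omega, by omega⟩,
   fun ⟨y, hy, h⟩ => ⟨x, y, rfl, hy, h⟩⟩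

lemma covers_intCast_right_iff {k : ZMod n} {s : ℕ} {w : ℤ} :
    Covers k s (w : ZMod n) ↔ ∃ x : ℤ, (x : ZMod n) = k ∧ x < w ∧ w < x + s :=
  ⟨fun ⟨x', y', hx', hy', h1, h2⟩ =>
    ⟨x' + w - y', by rw [intCast_add_sub_of_eq hy', hx'], by omega, by omega⟩,
   fun ⟨x, hx, h⟩ => ⟨x, w, hx, rfl, h⟩⟩

lemma Arc.compatible_inner_of_forall_lift {x : ℤ} {t : ℕ} {k : ZMod n} {s : ℕ}
    (h : ∀ y : ℤ, (y : ZMod n) = k →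
      ¬(x < y ∧ y < x + t ∧ x + t < y + s) ∧ ¬(y < x ∧ x < y + s ∧ y + s < x + t)) :
    (inner (x : ZMod n) t).Compatible (inner k s) := by
  rintro ⟨x', y', hx', hy', hp⟩
  have := h (y' + x - x') (by rw [intCast_add_sub_of_eq hx', hy'])
  omega

lemma PairwiseCompatible.not_crosses (hX : PairwiseCompatible n X) {x y : ℤ} {t s : ℕ}
    (hA : inner (x : ZMod n) t ∈ X) (hB : inner (y : ZMod n) s ∈ X) :
    ¬(x < y ∧ y < x + t ∧ x + t < y + s) :=
  fun h => hX.2 _ hA _ hB ⟨x, y, rfl, rfl, Or.inl h⟩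

lemma PairwiseCompatible.not_covers (hX : PairwiseCompatible n X) {v k : ZMod n} {s : ℕ}
    (hv : proj v ∈ X) (hA : inner k s ∈ X) : ¬Covers k s v :=
  hX.2 _ hA _ hv

lemma IsTriangulation.mem_of_forall_compatible (hX : IsTriangulation n X) {a : Arc n}
    (ha : a.IsAdmissible) (hc : ∀ b ∈ X, a.Compatible b) : a ∈ X := by
  have hY : PairwiseCompatible n (insert a X) := by
    refine ⟨?_, ?_⟩
    · rintro b (rfl | hb)
      exacts [ha, hX.1.1 b hb]
    · rintro b (rfl | hb) c (rfl | hc')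
      exacts [ha.compatible_self, hc c hc', (hc b hb).symm, hX.1.2 b hb c hc']
  rw [← hX.2 _ hY (Set.subset_insert a X)]
  exact Set.mem_insert a X

def Exposed (X : Set (Arc n)) (x : ℤ) (t : ℕ) (w : ℤ) : Prop :=
  x < w ∧ w < x + t ∧ ∀ (c : ℤ) (s : ℕ), inner (c : ZMod n) s ∈ X →
    x ≤ c → c + s ≤ x + t → c < w → w < c + s → c = x ∧ s = t

lemma PairwiseCompatible.exists_exposed (hX : PairwiseCompatible n X) (x : ℤ) {t : ℕ}
    (ht : 2 ≤ t) : ∃ w, Exposed X x t w := by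
  classical
  let IsProperSubarcLength (s : ℕ) : Prop :=
    ∃ c : ℤ, inner (c : ZMod n) s ∈ X ∧ x ≤ c ∧ c + s ≤ x + t ∧ ¬(c = x ∧ s = t)
  by_cases hP : ∃ s, IsProperSubarcLength s
  · obtain ⟨s₁, hs₁⟩ := hP
    have hs₁t : s₁ ≤ t := by obtain ⟨c, -, h1, h2, -⟩ := hs₁; omega
    set s₀ := Nat.findGreatest IsProperSubarcLength t
    have hmax : ∀ s, IsProperSubarcLength s → s ≤ s₀ := fun s hs =>
      Nat.le_findGreatest (by obtain ⟨c, -, h1, h2, -⟩ := hs; omega) hs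
    obtain ⟨c, hB, hxc, hct, hne⟩ := Nat.findGreatest_spec hs₁t hs₁
    have hs₀ : 2 ≤ s₀ := (hX.1 _ hB).1
    -- A proper subarc passing over an endpoint of the longest one would cross it.
    have hcross : ∀ (c' : ℤ) (s' : ℕ), inner (c' : ZMod n) s' ∈ X → s' ≤ s₀ →
        ¬(c' < c ∧ c < c' + s') ∧ (c' ≠ c → ¬(c' < c + s₀ ∧ c + s₀ < c' + s')) :=
      fun c' s' hB' hs' => ⟨fun h => hX.not_crosses hB' hB ⟨h.1, h.2, by omega⟩,
        fun hcc h => hX.not_crosses hB hB' ⟨by omega, h.1, h.2⟩⟩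
    by_cases hcx : c = x
    · refine ⟨c + s₀, by omega, by omega, fun c' s' hB' hxc' hc't h1 h2 => ?_⟩
      by_contra hne'
      have := hmax s' ⟨c', hB', hxc', hc't, hne'⟩
      have := (hcross c' s' hB' this).2
      omega
    · refine ⟨c, by omega, by omega, fun c' s' hB' hxc' hc't h1 h2 => ?_⟩
      by_contra hne'
      exact (hcross c' s' hB' (hmax s' ⟨c', hB', hxc', hc't, hne'⟩)).1 ⟨h1, h2⟩
  · refine ⟨x + 1, by omega, by omega, fun c s hB hxc hct h1 h2 => ?_⟩
    by_contra hne
    exact hP ⟨s, c, hB, hxc, hct, hne⟩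

lemma PairwiseCompatible.eq_of_exposed (hX : PairwiseCompatible n X) {x y w : ℤ} {t s : ℕ}
    (hA : inner (x : ZMod n) t ∈ X) (hw : Exposed X x t w) (hB : inner (y : ZMod n) s ∈ X)
    (h1 : y < w) (h2 : w < y + s) (hst : s ≤ t) : y = x ∧ s = t := by
  obtain ⟨hxw, hwt, hsub⟩ := hw
  have hAB := hX.not_crosses hA hB
  have hBA := hX.not_crosses hB hA
  by_cases hinside : x ≤ y ∧ y + s ≤ x + t
  · exact hsub y s hB hinside.1 hinside.2 h1 h2
  · omega

lemma IsTriangulation.exposed_unique (hX : IsTriangulation n X) {x a b : ℤ} {t : ℕ}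
    (hA : inner (x : ZMod n) t ∈ X) (ha : Exposed X x t a) (hb : Exposed X x t b) : a = b := by
  suffices key : ∀ {a b}, Exposed X x t a → Exposed X x t b → ¬a < b from
    le_antisymm (not_lt.1 (key hb ha)) (not_lt.1 (key ha hb))
  intro a b ⟨hxa, hat, ha⟩ ⟨hxb, hbt, hb⟩ hab
  obtain ⟨u, hu⟩ : ∃ u : ℕ, (u : ℤ) = b - x := ⟨(b - x).toNat, Int.toNat_of_nonneg (by omega)⟩
  have htn : t ≤ n := (hX.1.1 _ hA).2
  -- The arc `[x, b]` crosses nothing: an arc crossing it would pass over `b` or cross `[x, x + t]`.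
  have hD : inner (x : ZMod n) u ∈ X := by
    refine hX.mem_of_forall_compatible ⟨by omega, by omega⟩ ?_
    rintro (⟨k, s⟩ | j) hc
    · refine compatible_inner_of_forall_lift fun y hy => ?_
      subst hy
      have hAc := hX.1.not_crosses hA hc
      have hcA := hX.1.not_crosses hc hA
      refine ⟨fun h => ?_, fun h => hcA ⟨h.1, h.2.1, by omega⟩⟩
      have := hb y s hc h.1.le (by omega) (by omega) (by omega)
      omega
    · show ¬Covers _ _ _
      rw [covers_intCast_left_iff]
      rintro ⟨y, rfl, h1, h2⟩
      exact hX.1.not_covers hc hA ⟨x, y, rfl, rfl, h1, by omega⟩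
  have := ha x u hD le_rfl (by omega) hxa (by omega)
  omega

def IsShortestCover (X : Set (Arc n)) (v k : ZMod n) (s : ℕ) : Prop :=
  inner k s ∈ X ∧ Covers k s v ∧ ∀ k' s', inner k' s' ∈ X → Covers k' s' v → s ≤ s'

lemma Exposed.isShortestCover (hX : PairwiseCompatible n X) {x w : ℤ} {t : ℕ}
    (hA : inner (x : ZMod n) t ∈ X) (hw : Exposed X x t w) :
    IsShortestCover X (w : ZMod n) (x : ZMod n) t := by
  refine ⟨hA, ⟨x, w, rfl, rfl, hw.1, hw.2.1⟩, fun k s hB hcov => ?_⟩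
  obtain ⟨y, rfl, h1, h2⟩ := covers_intCast_right_iff.1 hcov
  by_contra hst
  have := hX.eq_of_exposed hA hw hB h1 h2 (by omega)
  omega

lemma IsShortestCover.exposed {x w : ℤ} {t : ℕ}
    (h : IsShortestCover X (w : ZMod n) (x : ZMod n) t) (h1 : x < w) (h2 : w < x + t) :
    Exposed X x t w := by
  refine ⟨h1, h2, fun c s hB hxc hct hc hw => ?_⟩
  have := h.2.2 _ _ hB ⟨c, w, rfl, rfl, hc, hw⟩
  omega

lemma IsShortestCover.unique (hX : PairwiseCompatible n X) {v k k' : ZMod n} {s s' : ℕ}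
    (h : IsShortestCover X v k s) (h' : IsShortestCover X v k' s') : k' = k ∧ s' = s := by
  obtain ⟨x, rfl⟩ := ZMod.intCast_surjective k
  obtain ⟨w, rfl, h1, h2⟩ := covers_intCast_left_iff.1 h.2.1
  obtain ⟨y, rfl, h1', h2'⟩ := covers_intCast_right_iff.1 h'.2.1
  have hs' : s' ≤ s := h'.2.2 _ _ h.1 h.2.1
  obtain ⟨rfl, rfl⟩ := hX.eq_of_exposed h.1 (h.exposed h1 h2) h'.1 h1' h2' hs'
  exact ⟨rfl, rfl⟩

lemma IsShortestCover.eq (hX : IsTriangulation n X) {v w k : ZMod n} {s : ℕ}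
    (hv : IsShortestCover X v k s) (hw : IsShortestCover X w k s) : v = w := by
  obtain ⟨x, rfl⟩ := ZMod.intCast_surjective k
  obtain ⟨a, rfl, ha1, ha2⟩ := covers_intCast_left_iff.1 hv.2.1
  obtain ⟨b, rfl, hb1, hb2⟩ := covers_intCast_left_iff.1 hw.2.1
  rw [hX.exposed_unique hv.1 (hv.exposed ha1 ha2) (hw.exposed hb1 hb2)]

def IsNearestArc (X : Set (Arc n)) (v : ZMod n) (a : Arc n) : Prop :=
  (∃ k s, a = inner k s ∧ IsShortestCover X v k s) ∨
    (a = proj v ∧ ∀ k s, inner k s ∈ X → ¬Covers k s v)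

lemma exists_isNearestArc (X : Set (Arc n)) (v : ZMod n) : ∃ a, IsNearestArc X v a := by
  classical
  by_cases hcov : ∃ s k, inner k s ∈ X ∧ Covers k s v
  · obtain ⟨k, hk, hkv⟩ := Nat.find_spec hcov
    exact ⟨_, Or.inl ⟨k, _, rfl, hk, hkv, fun k' s' h h' => Nat.find_min' hcov ⟨k', h, h'⟩⟩⟩
  · exact ⟨proj v, Or.inr ⟨rfl, fun k s hk hkv => hcov ⟨s, k, hk, hkv⟩⟩⟩

lemma IsNearestArc.mem (hX : IsTriangulation n X) {v : ZMod n} {a : Arc n}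
    (h : IsNearestArc X v a) : a ∈ X := by
  rcases h with ⟨k, s, rfl, hmin⟩ | ⟨rfl, hfree⟩
  · exact hmin.1
  · refine hX.mem_of_forall_compatible trivial fun b hb => ?_
    cases b with
    | inner k s => exact hfree k s hb
    | proj j => trivial

lemma IsNearestArc.unique (hX : PairwiseCompatible n X) {v : ZMod n} {a b : Arc n}
    (ha : IsNearestArc X v a) (hb : IsNearestArc X v b) : a = b := by
  rcases ha with ⟨k, s, rfl, ha⟩ | ⟨rfl, ha⟩ <;> rcases hb with ⟨k', s', rfl, hb⟩ | ⟨rfl, hb⟩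
  · obtain ⟨rfl, rfl⟩ := ha.unique hX hb
    rfl
  · exact absurd ha.2.1 (hb k s ha.1)
  · exact absurd hb.2.1 (ha k' s' hb.1)
  · rfl

lemma IsNearestArc.injective (hX : IsTriangulation n X) {v w : ZMod n} {a : Arc n}
    (hv : IsNearestArc X v a) (hw : IsNearestArc X w a) : v = w := by
  rcases hv with ⟨k, s, rfl, hv⟩ | ⟨rfl, -⟩ <;> rcases hw with ⟨k', s', he, hw⟩ | ⟨he, -⟩
  · obtain ⟨rfl, rfl⟩ := Arc.inner.inj he
    exact hv.eq hX hw
  · cases he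
  · cases he
  · exact Arc.proj.inj he

lemma exists_isNearestArc_of_mem (hX : PairwiseCompatible n X) {a : Arc n} (ha : a ∈ X) :
    ∃ v, IsNearestArc X v a := by
  cases a with
  | proj j => exact ⟨j, Or.inr ⟨rfl, fun k s hk => hX.not_covers ha hk⟩⟩
  | inner i t =>
    obtain ⟨x, rfl⟩ := ZMod.intCast_surjective i
    obtain ⟨w, hw⟩ := hX.exists_exposed x (hX.1 _ ha).1
    exact ⟨w, Or.inl ⟨_, _, rfl, hw.isShortestCover hX ha⟩⟩

end

/-- **Adachi, Proposition 2.4(1).** Every triangulation of the punctured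
`n`-gon consists of exactly `n` admissible arcs. -/
theorem triangulation_card (n : ℕ) (hn : 0 < n)
    (X : Set (Arc n)) (hX : IsTriangulation n X) :
    X.Finite ∧ X.ncard = n := by
  choose f hf using exists_isNearestArc X
  have hbij : (Set.univ : Set (ZMod n)).ncard = X.ncard :=
    Set.ncard_congr (fun v _ => f v) (fun v _ => (hf v).mem hX)
      (fun v w _ _ h => (hf v).injective hX (h ▸ hf w)) fun a ha => by
        obtain ⟨v, hv⟩ := exists_isNearestArc_of_mem hX.1 ha
        exact ⟨v, trivial, (hf v).unique hX.1 hv⟩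
  rw [Set.ncard_univ, Nat.card_zmod] at hbij
  exact ⟨Set.finite_of_ncard_pos (by omega), hbij.symm⟩

end Punctured
end

section
/- Let n be a positive integer and (a_1, …, a_n) a sequence of nonnegative integers with a_1 + ⋯ + a_n = n. Then the set of partial sums {a'_1, …, a'_n}, where a'_i := Σ_{j=1}^{i} (a_j − 1), is a set of consecutive integers; that is, {a'_1, …, a'_n} = {m ∈ ℤ : min_{1≤i≤n} a'_i ≤ m ≤ max_{1≤i≤n} a'_i}. -/
/-- Discrete intermediate value theorem for sequences with down-steps of size
at most 1. -/
lemma ivt_aux (f : ℕ → ℤ) (hf : ∀ j, f j - 1 ≤ f (j + 1)) :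
    ∀ k p m, f (p + k) ≤ m → m ≤ f p → ∃ j, p ≤ j ∧ j ≤ p + k ∧ f j = m := by
  intro k
  induction k with
  | zero =>
    intro p m h1 h2
    simp only [Nat.add_zero] at h1
    exact ⟨p, le_refl _, by simp, le_antisymm h1 h2⟩
  | succ k ih =>
    intro p m h1 h2
    by_cases h : f p = m
    · exact ⟨p, le_refl _, Nat.le_add_right _ _, h⟩
    · have hlt : m < f p := lt_of_le_of_ne h2 (Ne.symm h)
      have hm : m ≤ f (p + 1) := by
        have := hf p
        omega
      have h1' : f (p + 1 + k) ≤ m := by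
        have : p + 1 + k = p + (k + 1) := by omega
        rwa [this]
      obtain ⟨j, hj1, hj2, hj3⟩ := ih (p + 1) m h1' hm
      exact ⟨j, by omega, by omega, hj3⟩

/-- Let `(a_1, …, a_n)` be a sequence of nonnegative integers with
`a_1 + ⋯ + a_n = n`. Then the set of partial sums `{a'_1, …, a'_n}`, where
`a'_i := Σ_{j=1}^{i} (a_j − 1)`, is a set of consecutive integers: it equals
the interval between its infimum and its supremum. -/
theorem partialSums_interval (n : ℕ) (hn : 0 < n) (a : ℕ → ℕ)
    (ha : ∑ j ∈ Finset.Icc 1 n, a j = n) :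
    (fun i : ℕ => ∑ j ∈ Finset.Icc 1 i, ((a j : ℤ) - 1)) '' Set.Icc 1 n =
      Set.Icc
        (sInf ((fun i : ℕ => ∑ j ∈ Finset.Icc 1 i, ((a j : ℤ) - 1)) '' Set.Icc 1 n))
        (sSup ((fun i : ℕ => ∑ j ∈ Finset.Icc 1 i, ((a j : ℤ) - 1)) '' Set.Icc 1 n)) := by
  set f : ℕ → ℤ := fun i : ℕ => ∑ j ∈ Finset.Icc 1 i, ((a j : ℤ) - 1) with hfdef
  set S := f '' Set.Icc 1 n with hSdef
  have hstep : ∀ j, f j - 1 ≤ f (j + 1) := by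
    intro j
    have : f (j + 1) = f j + ((a (j + 1) : ℤ) - 1) := by
      simp only [hfdef]
      rw [Finset.sum_Icc_succ_top (by omega)]
    rw [this]
    have : (0 : ℤ) ≤ (a (j + 1) : ℤ) := Int.ofNat_nonneg _
    omega
  have hf0 : f 0 = 0 := by simp [hfdef]
  have hfn : f n = 0 := by
    have h1 : f n = (∑ j ∈ Finset.Icc 1 n, (a j : ℤ)) - (n : ℤ) := by
      simp [hfdef, Finset.sum_sub_distrib, Nat.card_Icc]
    have h2 : (∑ j ∈ Finset.Icc 1 n, (a j : ℤ)) = (n : ℤ) := by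
      rw [← Nat.cast_sum, ha]
    rw [h1, h2]; ring
  have hSfin : S.Finite := (Set.finite_Icc 1 n).image f
  have hSne : S.Nonempty := ⟨f n, n, ⟨hn, le_refl n⟩, rfl⟩
  obtain ⟨k, ⟨hk1, hk2⟩, hkinf⟩ : ∃ k ∈ Set.Icc 1 n, f k = sInf S := by
    obtain ⟨k, hk, hke⟩ := hSne.csInf_mem hSfin
    exact ⟨k, hk, hke⟩
  obtain ⟨i, ⟨hi1, hi2⟩, hisup⟩ : ∃ i ∈ Set.Icc 1 n, f i = sSup S := by
    obtain ⟨i, hi, hie⟩ := hSne.csSup_mem hSfin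
    exact ⟨i, hi, hie⟩
  apply Set.Subset.antisymm
  · intro x hx
    exact ⟨csInf_le hSfin.bddBelow hx, le_csSup hSfin.bddAbove hx⟩
  · rintro m ⟨hm1, hm2⟩
    rcases le_or_gt m 0 with hm0 | hm0
    · rcases eq_or_lt_of_le hm0 with rfl | hmneg
      · exact ⟨n, ⟨hn, le_refl n⟩, hfn⟩
      · have h1 : f (0 + k) ≤ m := by
          simpa [hkinf] using hm1
        have h2 : m ≤ f 0 := by omega
        obtain ⟨j, hj1, hj2, hj3⟩ := ivt_aux f hstep k 0 m h1 h2
        have hj0 : j ≠ 0 := by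
          intro h; rw [h, hf0] at hj3; omega
        exact ⟨j, ⟨by omega, le_trans (by omega) hk2⟩, hj3⟩
    · have hin : i + (n - i) = n := by omega
      have h1 : f (i + (n - i)) ≤ m := by
        rw [hin, hfn]; omega
      have h2 : m ≤ f i := by rw [hisup]; exact hm2
      obtain ⟨j, hj1, hj2, hj3⟩ := ivt_aux f hstep (n - i) i m h1 h2
      exact ⟨j, ⟨le_trans hi1 hj1, by omega⟩, hj3⟩
end

section
/- Let n be a positive integer and X ∈ 𝒯(n) a triangulation of the punctured n-gon that contains at least one inner arc. Let (i, t) ∈ X be an inner arc whose length t is maximal among the lengths of inner arcs in X. Then the projective arcs at i and at i + t both belong to X. (Claim established in the proof of Adachi, Proposition 2.4: for a longest inner arc from i to j in X, the projective arcs at i and j lie in X by maximality of the triangulation.) -/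
/-!
Combinatorial model of admissible arcs and triangulations of a regular
`n`-gon with one puncture (following Adachi, "The classification of
τ-tilting modules over Nakayama algebras").
-/

namespace Punctured

/-- **Claim in the proof of Adachi, Proposition 2.4.** Let `X` be a
triangulation of the punctured `n`-gon and let `(i, t) ∈ X` be an inner arc
whose length `t` is maximal among the lengths of inner arcs in `X`. Then the
projective arcs at `i` and at `i + t` both belong to `X`. -/
theorem proj_ends_of_longest_inner (n : ℕ) (hn : 0 < n)
    (X : Set (Arc n)) (hX : IsTriangulation n X)
    (i : ZMod n) (t : ℕ) (hmem : Arc.inner i t ∈ X)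
    (hmax : ∀ k : ZMod n, ∀ s : ℕ, Arc.inner k s ∈ X → s ≤ t) :
    Arc.proj i ∈ X ∧ Arc.proj (i + (t : ZMod n)) ∈ X := by
  obtain ⟨⟨hadm, hcomp⟩, hmaxT⟩ := hX
  have key : ∀ j : ZMod n,
      (∀ k : ZMod n, ∀ s : ℕ, Arc.inner k s ∈ X →
        ¬∃ x y : ℤ, (x : ZMod n) = k ∧ (y : ZMod n) = j ∧ x < y ∧ y < x + (s : ℤ)) →
      Arc.proj j ∈ X := by
    intro j hj
    have hpc : PairwiseCompatible n (insert (Arc.proj j) X) := by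
      constructor
      · intro a ha
        rcases ha with rfl | ha
        · trivial
        · exact hadm a ha
      · intro a ha b hb
        rcases ha with rfl | ha <;> rcases hb with rfl | hb
        · trivial
        · cases b with
          | inner k s => exact hj k s hb
          | proj => trivial
        · cases a with
          | inner k s => exact hj k s ha
          | proj => trivial
        · exact hcomp a ha b hb
    have := hmaxT _ hpc (Set.subset_insert _ _)
    rw [← this]; exact Set.mem_insert _ _
  constructor
  · apply key
    rintro k s hks ⟨x, y, hx, hy, h1, h2⟩
    have hst : (s : ℤ) ≤ t := by exact_mod_cast hmax k s hks
    exact hcomp _ hmem _ hks ⟨y, x, hy, hx, Or.inr ⟨h1, h2, by linarith⟩⟩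
  · apply key
    rintro k s hks ⟨x, y, hx, hy, h1, h2⟩
    have hst : (s : ℤ) ≤ t := by exact_mod_cast hmax k s hks
    rcases lt_or_ge (y - (t : ℤ)) x with h | h
    · refine hcomp _ hmem _ hks ⟨y - (t : ℤ), x, ?_, hx,
        Or.inl ⟨h, by linarith, by linarith⟩⟩
      push_cast
      rw [hy]; ring
    · linarith

end Punctured
end
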